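/- arXiv:0902.2329 — 5 statements merged into one kernel-verified Lean document; each statement's English description precedes it below -/
import Mathlib

section
/- For nonnegative integers A, B, C with C <= B, the sum over i from 0 to C of C^{i+A}_i * C^{B-i}_{C-i} equals C^{A+B+1}_C, where C^m_n denotes the Catalan triangle number ((m-n+1)/(m+1)) * binomial(m+n, n). -/
/-
Both sides, viewed as functions of `(B, C)` on the region `C ≤ B + 1`, satisfy the Pascal-type
recurrence `F (B+1) (C+1) = F (B+1) C + F B (C+1)` of the Catalan triangle, take the value `1`
at `C = 0` and agree on the diagonal `C = B + 1`. Such a function is determined by these boundary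
values. For the left side the recurrence is inherited termwise from `catT`; the last summand
`catT (C+1+A) (C+1) * catT (B-C-1) 0` is exactly what moves from one sum to the other. On the
diagonal every summand but the last vanishes because `catT m (m+1) = 0`.
-/

def catT (m n : ℕ) : ℚ := (((m : ℚ) - n + 1) / ((m : ℚ) + 1)) * Nat.choose (m + n) n

theorem eq_of_pascal_recurrence {α : Type*} [Add α] {f g : ℕ → ℕ → α}
    (hf : ∀ B C, C ≤ B → f (B + 1) (C + 1) = f (B + 1) C + f B (C + 1))
    (hg : ∀ B C, C ≤ B → g (B + 1) (C + 1) = g (B + 1) C + g B (C + 1))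
    (h_zero : ∀ B, f B 0 = g B 0) (h_diag : ∀ B, f B (B + 1) = g B (B + 1)) :
    ∀ B C, C ≤ B + 1 → f B C = g B C := by
  intro B
  induction B with
  | zero =>
    intro C hC
    interval_cases C
    exacts [h_zero 0, h_diag 0]
  | succ B ih =>
    intro C hC
    induction C with
    | zero => exact h_zero _
    | succ C ihC =>
      rcases (show C = B + 1 ∨ C ≤ B by omega) with rfl | hCB
      · exact h_diag _
      · rw [hf B C hCB, hg B C hCB, ihC (by omega), ih (C + 1) (by omega)]

namespace catT

theorem zero_right (m : ℕ) : catT m 0 = 1 := by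
  have : (m : ℚ) + 1 ≠ 0 := by positivity
  simp [catT, this]

theorem self_succ (m : ℕ) : catT m (m + 1) = 0 := by
  simp [catT]

theorem succ_succ (m n : ℕ) : catT (m + 1) (n + 1) = catT (m + 1) n + catT m (n + 1) := by
  have hchoose : ((m + n + 1).choose (n + 1) : ℚ) * (n + 1) = (m + n + 1).choose n * (m + 1) := by
    have h := Nat.choose_succ_right_eq (m + n + 1) n
    rw [show m + n + 1 - n = m + 1 by omega] at h
    exact_mod_cast h
  unfold catT
  rw [show m + 1 + (n + 1) = m + n + 1 + 1 by omega, show m + 1 + n = m + n + 1 by omega,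
    show m + (n + 1) = m + n + 1 by omega, Nat.choose_succ_succ]
  have hm₁ : (m : ℚ) + 1 ≠ 0 := by positivity
  have hm₂ : (m : ℚ) + 1 + 1 ≠ 0 := by positivity
  push_cast
  field_simp
  linear_combination hchoose

end catT

def catTConv (A B C : ℕ) : ℚ :=
  ∑ i ∈ Finset.range (C + 1), catT (i + A) i * catT (B - i) (C - i)

namespace catTConv

theorem zero_right (A B : ℕ) : catTConv A B 0 = 1 := by
  simp [catTConv, catT.zero_right]

theorem succ_self (A B : ℕ) : catTConv A B (B + 1) = catT (A + B + 1) (B + 1) := by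
  have h_vanish : ∀ i ∈ Finset.range (B + 1), catT (i + A) i * catT (B - i) (B + 1 - i) = 0 := by
    intro i hi
    rw [show B + 1 - i = B - i + 1 by grind, catT.self_succ, mul_zero]
  rw [catTConv, Finset.sum_range_succ, Finset.sum_eq_zero h_vanish, Nat.sub_self,
    catT.zero_right, zero_add, mul_one, show B + 1 + A = A + B + 1 by omega]

theorem succ_succ (A B C : ℕ) (hCB : C ≤ B) :
    catTConv A (B + 1) (C + 1) = catTConv A (B + 1) C + catTConv A B (C + 1) := by
  have h_split : ∀ i ∈ Finset.range (C + 1),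
      catT (i + A) i * catT (B + 1 - i) (C + 1 - i)
        = catT (i + A) i * catT (B + 1 - i) (C - i) + catT (i + A) i * catT (B - i) (C + 1 - i) := by
    intro i hi
    rw [show B + 1 - i = B - i + 1 by grind, show C + 1 - i = C - i + 1 by grind,
      catT.succ_succ, mul_add]
  simp only [catTConv]
  rw [Finset.sum_range_succ, Finset.sum_congr rfl h_split, Finset.sum_add_distrib,
    Finset.sum_range_succ _ (C + 1), Nat.sub_self, catT.zero_right, catT.zero_right, add_assoc]

end catTConv

/-- Convolution identity for Catalan triangle numbers:
`∑_{i=0}^{C} C^{i+A}_i C^{B-i}_{C-i} = C^{A+B+1}_C`. -/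
theorem catalan_triangle_convolution (A B C : ℕ) (hCB : C ≤ B) :
    ∑ i ∈ Finset.range (C + 1), catT (i + A) i * catT (B - i) (C - i)
      = catT (A + B + 1) C := by
  have h_rhs : ∀ B C, C ≤ B →
      catT (A + (B + 1) + 1) (C + 1) = catT (A + (B + 1) + 1) C + catT (A + B + 1) (C + 1) := by
    intro B C _
    rw [show A + (B + 1) + 1 = A + B + 1 + 1 by omega, catT.succ_succ]
  have h_zero (B : ℕ) : catTConv A B 0 = catT (A + B + 1) 0 := by
    rw [catTConv.zero_right, catT.zero_right]
  exact eq_of_pascal_recurrence (f := catTConv A) (g := fun B C ↦ catT (A + B + 1) C)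
    (catTConv.succ_succ A) h_rhs h_zero (catTConv.succ_self A) B C (by omega)
end

section
/- For nonnegative integers B, v, n with appropriate ranges, the sum over s from v to floor(n/2) of C^{B+2s}_{n-2s} equals binomial(B+n-1, n-2v), where C^m_k = ((m-k+1)/(m+1)) * binomial(m+k, k). -/
/-!
The ballot formula `C^m_k = C(m+k, k) - C(m+k, k-1)` and Pascal's rule give
`C^m_k = C(m+k-1, k) - C(m+k-1, k-2)`. Along the sum the upper index `m + k = B + n` is constant
and the lower index drops by two at each step, so the sum telescopes to `C(B+n-1, n-2v)`.
-/

theorem catT_zero (m : ℕ) : catT m 0 = 1 := by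
  have : (m : ℚ) + 1 ≠ 0 := by positivity
  simp [catT, this]

theorem catT_succ_eq_choose_sub_choose (m k : ℕ) :
    catT m (k + 1) = (Nat.choose (m + k + 1) (k + 1) : ℚ) - Nat.choose (m + k + 1) k := by
  have hrel : ((m + k + 1).choose (k + 1) : ℚ) * (k + 1) = (m + k + 1).choose k * (m + 1) := by
    have := Nat.choose_succ_right_eq (m + k + 1) k
    rw [show m + k + 1 - k = m + 1 by omega] at this
    exact_mod_cast this
  have hm : (m : ℚ) + 1 ≠ 0 := by positivity
  rw [catT, ← add_assoc, div_mul_eq_mul_div, div_eq_iff hm]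
  push_cast
  linear_combination -hrel

theorem catT_add_two (M k : ℕ) :
    catT (M + 1) (k + 2)
      = (Nat.choose (M + k + 2) (k + 2) : ℚ) - Nat.choose (M + k + 2) k := by
  rw [catT_succ_eq_choose_sub_choose, show M + 1 + (k + 1) + 1 = (M + k + 2) + 1 by ring,
    Nat.choose_succ_succ' (M + k + 2) (k + 1), Nat.choose_succ_succ' (M + k + 2) k]
  push_cast
  ring

theorem sum_range_catT_eq_choose :
    (M r : ℕ) → ∑ i ∈ Finset.range (r / 2 + 1), catT (M + 1 + 2 * i) (r - 2 * i)
      = (Nat.choose (M + r) r : ℚ)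
  | M, 0 => by simp [catT_zero]
  | M, 1 => by simp [catT_succ_eq_choose_sub_choose]
  | M, r + 2 => by
    have htail : ∑ i ∈ Finset.range (r / 2 + 1), catT (M + 1 + 2 * (i + 1)) (r + 2 - 2 * (i + 1))
        = (Nat.choose (M + r + 2) r : ℚ) := by
      rw [show M + r + 2 = M + 2 + r by ring, ← sum_range_catT_eq_choose (M + 2) r]
      refine Finset.sum_congr rfl fun i _ => ?_
      congr 1 <;> omega
    rw [show (r + 2) / 2 + 1 = r / 2 + 1 + 1 by omega, Finset.sum_range_succ', htail,
      Nat.mul_zero, Nat.add_zero, Nat.sub_zero, catT_add_two, ← add_assoc]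
    ring

/-- `∑_{s=v}^{⌊n/2⌋} C^{B+2s}_{n-2s} = C(B+n-1, n-2v)`. -/
theorem catalan_triangle_column_sum (B v n : ℕ) (hB : 1 ≤ B) (hv : 2 * v ≤ n) :
    ∑ s ∈ Finset.Icc v (n / 2), catT (B + 2 * s) (n - 2 * s)
      = (Nat.choose (B + n - 1) (n - 2 * v) : ℚ) := by
  obtain ⟨M, rfl⟩ : ∃ M, B = M + 1 := ⟨B - 1, by omega⟩
  obtain ⟨r, rfl⟩ : ∃ r, n = 2 * v + r := ⟨n - 2 * v, by omega⟩
  rw [← Finset.Ico_add_one_right_eq_Icc, Finset.sum_Ico_eq_sum_range,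
    show (2 * v + r) / 2 + 1 - v = r / 2 + 1 by omega,
    show M + 1 + (2 * v + r) - 1 = M + 2 * v + r by omega, show 2 * v + r - 2 * v = r by omega,
    ← sum_range_catT_eq_choose (M + 2 * v) r]
  refine Finset.sum_congr rfl fun i _ => ?_
  congr 1 <;> omega
end

section
/- For n >= 3, the double sum S_2 = sum over k from 0 to n-3, sum over v from 0 to k of binomial(2k+3, k-v)*binomial(2n-2k-4, n-k-v-2), minus sum over k from 0 to n-3 of binomial(2k+1, k+1)*binomial(2n-2k-3, n-k-3), equals (n+2)/4 * binomial(2n, n) - 3 * 2^(2n-3). -/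
/-- `C(a, z)` with integer lower index, vanishing when `z < 0` (and when `z > a`). -/
def choosez (a : ℕ) (z : ℤ) : ℕ := if z < 0 then 0 else a.choose z.toNat

namespace S2aux

def U (n : ℕ) : ℚ := ((2*n).choose n : ℚ)
def R (a n : ℕ) : ℚ := ((2*n+a).choose n : ℚ)
def conv (a b N : ℕ) : ℚ := ∑ i ∈ Finset.range (N+1), R a i * R b (N-i)
def w (t N : ℕ) : ℚ := conv 0 t N

lemma R_zero (a : ℕ) : R a 0 = 1 := by simp [R]

lemma R_one (a : ℕ) : R a 1 = a + 2 := by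
  simp [R, Nat.choose_one_right]; ring

lemma R_zero_eq_U (n : ℕ) : R 0 n = U n := by simp [R, U]

lemma U_zero : U 0 = 1 := by simp [U]

lemma U_rec (N : ℕ) : ((N:ℚ)+1) * U (N+1) = 2*(2*(N:ℚ)+1) * U N := by
  have h := Nat.succ_mul_centralBinom_succ N
  have h2 : ∀ m : ℕ, U m = (Nat.centralBinom m : ℚ) := by
    intro m; simp [U, Nat.centralBinom]
  rw [h2, h2]
  exact_mod_cast congrArg (fun x : ℕ => (x : ℚ)) h

lemma R1_half (n : ℕ) : 2 * R 1 n = U (n+1) := by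
  have : (2*(n+1)).choose (n+1) = (2*n+1).choose n + (2*n+1).choose (n+1) := by
    have : 2*(n+1) = (2*n+1)+1 := by ring
    rw [this, Nat.choose_succ_succ']
  have hsymm : (2*n+1).choose (n+1) = (2*n+1).choose n := Nat.choose_symm_half n
  simp only [R, U]
  rw [this, hsymm]
  push_cast; ring

lemma pascal (a n : ℕ) : R (a+1) (n+1) = R a (n+1) + R (a+2) n := by
  have h1 : 2*(n+1)+(a+1) = (2*n+a+2)+1 := by ring
  have : (2*(n+1)+(a+1)).choose (n+1) = (2*n+a+2).choose n + (2*n+a+2).choose (n+1) := by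
    rw [h1, Nat.choose_succ_succ]
  simp only [R, this]
  push_cast
  have h2 : 2*(n+1)+a = 2*n+a+2 := by ring
  have h3 : 2*n+(a+2) = 2*n+a+2 := by ring
  rw [h2, h3]; ring


lemma conv_zero (a b : ℕ) : conv a b 0 = 1 := by
  simp [conv, R_zero]

lemma conv_comm (a b N : ℕ) : conv a b N = conv b a N := by
  unfold conv
  rw [← Finset.sum_range_reflect]
  apply Finset.sum_congr rfl
  intro i hi
  simp only [Finset.mem_range] at hi
  have h1 : N + 1 - 1 - i = N - i := by omega
  have h2 : N - (N - i) = i := by omega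
  rw [h1, h2, mul_comm]

lemma convE (a b N : ℕ) : conv a (b+1) (N+1) = conv a b (N+1) + conv a (b+2) N := by
  unfold conv
  have hsplit : ∀ c : ℕ, ∑ i ∈ Finset.range (N+2), R a i * R c (N+1-i)
      = (∑ i ∈ Finset.range (N+1), R a i * R c (N+1-i)) + R a (N+1) * R c 0 := by
    intro c
    rw [Finset.sum_range_succ]
    congr 2
    simp
  rw [hsplit, hsplit]
  have : ∑ i ∈ Finset.range (N+1), R a i * R (b+1) (N+1-i)
      = ∑ i ∈ Finset.range (N+1), (R a i * R b (N+1-i) + R a i * R (b+2) (N-i)) := by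
    apply Finset.sum_congr rfl
    intro i hi
    simp only [Finset.mem_range] at hi
    have h1 : N + 1 - i = (N - i) + 1 := by omega
    rw [h1, pascal]
    have h2 : N - i + 1 = N + 1 - i := by omega
    rw [h2]; ring
  rw [this, Finset.sum_add_distrib, R_zero, R_zero]
  ring

lemma shift (N : ℕ) : ∀ a b, conv a (b+1) N = conv (a+1) b N := by
  induction N using Nat.strong_induction_on with
  | _ N ih =>
    intro a b
    match N with
    | 0 => rw [conv_zero, conv_zero]
    | (M+1) =>
      rw [convE, conv_comm (a+1) b, conv_comm a b (M+1)]
      have h1 : conv b (a+1) (M+1) = conv b a (M+1) + conv b (a+2) M := convE b a M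
      rw [h1]
      congr 1
      calc conv a (b+2) M = conv (a+1) (b+1) M := ih M (by omega) a (b+1)
        _ = conv (a+2) b M := ih M (by omega) (a+1) b
        _ = conv b (a+2) M := conv_comm _ _ _


lemma conv_to_w (a b N : ℕ) : conv a b N = w (a+b) N := by
  induction a generalizing b with
  | zero => simp [w]
  | succ a ih =>
    rw [← shift N a b, ih (b+1)]
    congr 1
    omega

-- w as sum of U's

lemma w_zero_def (N : ℕ) : w 0 N = ∑ i ∈ Finset.range (N+1), U i * U (N-i) := by
  unfold w conv
  exact Finset.sum_congr rfl fun i _ => by rw [R_zero_eq_U, R_zero_eq_U]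

lemma claim1 (M : ℕ) : ∑ i ∈ Finset.range (M+1), (2*(i:ℚ)) * (U i * U (M-i))
    = (M:ℚ) * w 0 M := by
  have hrefl : ∑ i ∈ Finset.range (M+1), (2*(i:ℚ)) * (U i * U (M-i))
      = ∑ i ∈ Finset.range (M+1), (2*((M:ℚ)-(i:ℚ))) * (U i * U (M-i)) := by
    rw [← Finset.sum_range_reflect]
    apply Finset.sum_congr rfl
    intro i hi
    simp only [Finset.mem_range] at hi
    have h1 : M + 1 - 1 - i = M - i := by omega
    have h2 : M - (M - i) = i := by omega
    have h3 : ((M - i : ℕ) : ℚ) = (M:ℚ) - i := by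
      have : i ≤ M := by omega
      push_cast [this]; ring
    rw [h1, h2, h3]
    ring
  have h2 : (∑ i ∈ Finset.range (M+1), (2*(i:ℚ)) * (U i * U (M-i)))
        + (∑ i ∈ Finset.range (M+1), (2*(i:ℚ)) * (U i * U (M-i)))
      = 2 * ((M:ℚ) * w 0 M) := by
    nth_rewrite 2 [hrefl]
    rw [w_zero_def, ← Finset.sum_add_distrib, Finset.mul_sum, Finset.mul_sum]
    apply Finset.sum_congr rfl
    intro i hi
    ring
  linarith

lemma E0 (N : ℕ) : w 0 N = 4^N := by
  induction N with
  | zero => show conv 0 0 0 = _; rw [conv_zero]; norm_num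
  | succ N ih =>
    -- key: (2N+2) * w 0 N = (N+1)/2 * w 0 (N+1)
    have key : ∑ i ∈ Finset.range (N+1), (2*(2*(i:ℚ)+1)) * (U i * U (N-i))
        = ∑ i ∈ Finset.range (N+2), ((i:ℚ)) * (U i * U (N+1-i)) := by
      rw [Finset.sum_range_succ' (fun i => ((i:ℚ)) * (U i * U (N+1-i))) (N+1)]
      simp only [Nat.cast_zero, zero_mul, add_zero]
      apply Finset.sum_congr rfl
      intro i hi
      simp only [Finset.mem_range] at hi
      have h1 : N + 1 - (i+1) = N - i := by omega
      rw [h1]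
      have h2 : ((i:ℚ)+1) * U (i+1) = 2*(2*(i:ℚ)+1) * U i := U_rec i
      push_cast
      calc (2*(2*(i:ℚ)+1)) * (U i * U (N-i)) = ((2*(2*(i:ℚ)+1)) * U i) * U (N-i) := by ring
        _ = (((i:ℚ)+1) * U (i+1)) * U (N-i) := by rw [h2]
        _ = ((i:ℚ)+1) * (U (i+1) * U (N-i)) := by ring
    have lhs_eq : ∑ i ∈ Finset.range (N+1), (2*(2*(i:ℚ)+1)) * (U i * U (N-i))
        = 2 * ((N:ℚ) * w 0 N) + 2 * w 0 N := by
      have : ∀ i ∈ Finset.range (N+1), (2*(2*(i:ℚ)+1)) * (U i * U (N-i))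
          = 2 * ((2*(i:ℚ)) * (U i * U (N-i))) + 2 * (U i * U (N-i)) := by
        intro i _; ring
      rw [Finset.sum_congr rfl this, Finset.sum_add_distrib, ← Finset.mul_sum, ← Finset.mul_sum,
        claim1, ← w_zero_def]
    have rhs_eq : ∑ i ∈ Finset.range (N+2), ((i:ℚ)) * (U i * U (N+1-i))
        = ((N:ℚ)+1) * w 0 (N+1) / 2 := by
      have := claim1 (N+1)
      push_cast at this ⊢
      have h2 : ∑ i ∈ Finset.range (N+2), (2*(i:ℚ)) * (U i * U (N+1-i))
          = 2 * ∑ i ∈ Finset.range (N+2), ((i:ℚ)) * (U i * U (N+1-i)) := by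
        rw [Finset.mul_sum]; apply Finset.sum_congr rfl; intro i _; ring
      rw [h2] at this
      linarith
    rw [key, rhs_eq] at lhs_eq
    have hN1 : ((N:ℚ)+1) ≠ 0 := by positivity
    rw [ih] at lhs_eq
    field_simp at lhs_eq
    rw [pow_succ]
    nlinarith [lhs_eq]


lemma M4 (t N : ℕ) : w (t+1) (N+1) = w t (N+1) + w (t+2) N := convE 0 t N

lemma w_zero' (t : ℕ) : w t 0 = 1 := conv_zero 0 t

lemma w1 (N : ℕ) : w 1 N = (4^(N+1) - U (N+1)) / 2 := by
  have h : w 0 (N+1) = 2 * w 1 N + U (N+1) := by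
    have e1 : w 0 (N+1) = (∑ i ∈ Finset.range (N+1), R 0 i * R 0 (N+1-i)) + R 0 (N+1) * R 0 0 := by
      unfold w conv
      rw [Finset.sum_range_succ]
      congr 2
      simp
    have e2 : ∑ i ∈ Finset.range (N+1), R 0 i * R 0 (N+1-i)
        = ∑ i ∈ Finset.range (N+1), 2 * (R 0 i * R 1 (N-i)) := by
      apply Finset.sum_congr rfl
      intro i hi
      simp only [Finset.mem_range] at hi
      have h1 : N + 1 - i = (N - i) + 1 := by omega
      rw [h1, R_zero_eq_U (N-i+1), ← R1_half (N-i)]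
      ring
    rw [e1, e2, ← Finset.mul_sum, R_zero, R_zero_eq_U]
    show 2 * conv 0 1 N + U (N+1) * 1 = _
    rw [show conv 0 1 N = w 1 N from rfl]
    ring
  rw [E0] at h
  linarith

lemma w2 (N : ℕ) : w 2 N = 4^(N+1) - U (N+2) / 2 := by
  have h := M4 0 N
  norm_num [E0, w1] at h
  simp only [show N+1+1 = N+2 from rfl] at h
  have h4 : (4:ℚ)^(N+2) = 4^(N+1)*4 := by rw [show N+2 = (N+1)+1 from rfl, pow_succ]
  linarith

lemma w3 (N : ℕ) : w 3 N = 4^(N+2)/2 - U (N+3) / 2 + U (N+2) / 2 := by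
  have h := M4 1 N
  rw [w1, w2] at h
  linarith

lemma w4 (N : ℕ) : w 4 N = 4^(N+2) - U (N+4) / 2 + U (N+3) := by
  have h := M4 2 N
  rw [w2, w3] at h
  have : (4:ℚ)^(N+1+2) = 4 * 4^(N+2) := by ring
  rw [this] at h
  linarith

lemma w_at_1 (t : ℕ) : w t 1 = (t:ℚ) + 4 := by
  unfold w conv
  rw [Finset.sum_range_succ, Finset.sum_range_one]
  norm_num [R_zero, R_one, R_zero_eq_U]
  ring

def Z : ℕ → ℕ → ℚ
  | _, 0 => 1
  | t, 1 => w t 1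
  | t, (N+2) => w t (N+2) + Z (t+4) N

lemma Z_zero (t : ℕ) : Z t 0 = 1 := rfl

lemma Z_one (t : ℕ) : Z t 1 = w t 1 := rfl

lemma Z_two (t N : ℕ) : Z t (N+2) = w t (N+2) + Z (t+4) N := rfl

lemma rel2 (N : ℕ) : ∀ t, Z (t+1) (N+1) = Z t (N+1) + Z (t+2) N := by
  induction N using Nat.strong_induction_on with
  | _ N ih =>
    intro t
    match N with
    | 0 =>
      have e1 : Z (t+1) 1 = w (t+1) 1 := rfl
      have e2 : Z t 1 = w t 1 := rfl
      have e3 : Z (t+2) 0 = 1 := rfl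
      have h := M4 t 0
      have e4 : w (t+2) 0 = 1 := w_zero' (t+2)
      norm_num at h
      rw [e1, e2, e3, h, e4]
    | 1 =>
      have e1 : Z (t+1) 2 = w (t+1) 2 + 1 := rfl
      have e2 : Z t 2 = w t 2 + 1 := rfl
      have e3 : Z (t+2) 1 = w (t+2) 1 := rfl
      have h := M4 t 1
      norm_num at h
      rw [e1, e2, e3, h]
      ring
    | (M+2) =>
      have e1 : Z (t+1) (M+2+1) = w (t+1) (M+3) + Z (t+5) (M+1) := rfl
      have e2 : Z t (M+2+1) = w t (M+3) + Z (t+4) (M+1) := rfl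
      have e3 : Z (t+2) (M+2) = w (t+2) (M+2) + Z (t+6) M := rfl
      have h : w (t+1) (M+3) = w t (M+3) + w (t+2) (M+2) := M4 t (M+2)
      have h2 : Z (t+5) (M+1) = Z (t+4) (M+1) + Z (t+6) M := ih M (by omega) (t+4)
      rw [e1, e2, e3, h, h2]
      ring


lemma P (t N : ℕ) : Z (t+2) N + w t N = 2 * Z (t+1) N := by
  match N with
  | 0 =>
    have e1 : Z (t+2) 0 = 1 := rfl
    have e2 : Z (t+1) 0 = 1 := rfl
    rw [e1, e2, w_zero']
    ring
  | 1 =>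
    have e1 : Z (t+2) 1 = w (t+2) 1 := rfl
    have e2 : Z (t+1) 1 = w (t+1) 1 := rfl
    rw [e1, e2, w_at_1, w_at_1, w_at_1]
    push_cast; ring
  | (M+2) =>
    -- rel2 chain
    have h1 : Z (t+2) (M+2) = Z (t+1) (M+2) + Z (t+3) (M+1) := rel2 (M+1) (t+1)
    have h2 : Z (t+1) (M+2) = Z t (M+2) + Z (t+2) (M+1) := rel2 (M+1) t
    have h3 : Z t (M+2) = w t (M+2) + Z (t+4) M := rfl
    have h4 : Z (t+3) (M+1) = Z (t+2) (M+1) + Z (t+4) M := rel2 M (t+2)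
    rw [h1, h4, h2, h3]
    ring

lemma Z2rec (N : ℕ) : Z 2 (N+1) = 4 * Z 2 N + U (N+1) := by
  have h1 : Z 2 (N+1) = Z 1 (N+1) + Z 3 N := rel2 N 1
  have h2 : Z 2 (N+1) + w 0 (N+1) = 2 * Z 1 (N+1) := P 0 (N+1)
  have h3 : Z 3 N + w 1 N = 2 * Z 2 N := P 1 N
  rw [E0] at h2
  rw [w1] at h3
  have h4 : (4:ℚ)^(N+1) = 4^N*4 := pow_succ 4 N
  linarith

lemma Z2closed (N : ℕ) : Z 2 N = (2*(N:ℚ)+1) * U N := by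
  induction N with
  | zero =>
    have e : Z 2 0 = 1 := rfl
    rw [e, show U 0 = 1 by norm_num [U]]
    norm_num
  | succ N ih =>
    rw [Z2rec, ih]
    have h := U_rec N
    push_cast
    nlinarith [h]

lemma Z3closed (N : ℕ) : Z 3 N = 2*(2*(N:ℚ)+1) * U N - (4^(N+1) - U (N+1))/2 := by
  have h := P 1 N
  rw [w1, Z2closed] at h
  linarith

-- R 3 in terms of U : 2*(N+3) * R 3 N = (N+1) * U (N+2)

lemma R3U (N : ℕ) : 2*((N:ℚ)+3) * R 3 N = ((N:ℚ)+1) * U (N+2) := by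
  have key : (2*N+3).choose (N+1) * (N+1) = (2*N+3).choose N * (N+3) := by
    have := Nat.choose_succ_right_eq (2*N+3) N
    rw [this]
    congr 1
    omega
  -- (2*N+3).choose (N+1) = R 1 (N+1), and 2 * R 1 (N+1) = U (N+2)
  have h1 : 2 * R 1 (N+1) = U (N+2) := R1_half (N+1)
  have h2 : R 1 (N+1) = ((2*N+3).choose (N+1) : ℚ) := by
    unfold R
    rw [show 2*(N+1)+1 = 2*N+3 from by omega]
  have h3 : R 3 N = ((2*N+3).choose N : ℚ) := rfl
  have key' : ((2*N+3).choose (N+1) : ℚ) * ((N:ℚ)+1) = ((2*N+3).choose N : ℚ) * ((N:ℚ)+3) := by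
    exact_mod_cast congrArg (fun x : ℕ => (x:ℚ)) key
  rw [← h1, h2] at *
  nlinarith [key', h2, h3]


lemma choosez_natCast (a m : ℕ) : choosez a (m : ℤ) = a.choose m := by
  simp [choosez]

lemma choosez_neg (a : ℕ) {z : ℤ} (h : z < 0) : choosez a z = 0 := by
  simp [choosez, h]

/-- L-sum translation -/

lemma mid (N v : ℕ) (hv : v < N) :
    (∑ j ∈ Finset.range (N - v),
      R (2*v+3) j * (if ((N:ℤ) - 2*(v:ℤ) - (j:ℤ)) < 0 then 0 else R (2*v) (N-2*v-j)))
    = (if 2*v ≤ N then w (3+4*v) (N-2*v) else 0) - (if v = 0 then R 3 N else 0) := by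
  by_cases hv0 : v = 0
  · subst hv0
    rw [if_pos (by omega : 2*0 ≤ N), if_pos rfl]
    have hterm : ∀ j ∈ Finset.range (N - 0),
        R (2*0+3) j * (if ((N:ℤ) - 2*((0:ℕ):ℤ) - (j:ℤ)) < 0 then 0 else R (2*0) (N-2*0-j))
        = R 3 j * R 0 (N - j) := by
      intro j hj
      simp only [Finset.mem_range] at hj
      rw [if_neg (by omega)]
      norm_num
    rw [Finset.sum_congr rfl hterm]
    have hc : conv 3 0 N = (∑ j ∈ Finset.range N, R 3 j * R 0 (N-j)) + R 3 N * R 0 0 := by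
      unfold conv
      rw [Finset.sum_range_succ]
      simp
    have h2 : (∑ j ∈ Finset.range (N-0), R 3 j * R 0 (N-j)) = conv 3 0 N - R 3 N := by
      rw [hc, R_zero, Nat.sub_zero]; ring
    rw [h2, conv_to_w]
    norm_num
  · rw [if_neg hv0]
    by_cases h2v : 2*v ≤ N
    · rw [if_pos h2v]
      have hsub : Finset.range (N - 2*v + 1) ⊆ Finset.range (N - v) := by
        apply Finset.range_subset_range.mpr
        omega
      rw [← Finset.sum_subset hsub]
      · have hterm : ∀ j ∈ Finset.range (N - 2*v + 1),
            R (2*v+3) j * (if ((N:ℤ) - 2*(v:ℤ) - (j:ℤ)) < 0 then 0 else R (2*v) (N-2*v-j))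
            = R (2*v+3) j * R (2*v) ((N-2*v)-j) := by
          intro j hj
          simp only [Finset.mem_range] at hj
          rw [if_neg (by omega)]
        rw [Finset.sum_congr rfl hterm]
        have : conv (2*v+3) (2*v) (N-2*v)
            = ∑ j ∈ Finset.range ((N-2*v)+1), R (2*v+3) j * R (2*v) ((N-2*v)-j) := rfl
        rw [show N - 2*v + 1 = (N-2*v)+1 from rfl, ← this, conv_to_w]
        rw [show 2*v+3+2*v = 3+4*v by omega]
        ring
      · intro j hjin hjout
        simp only [Finset.mem_range] at hjin hjout
        rw [if_pos (by omega)]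
        norm_num
    · rw [if_neg h2v]
      rw [show (0:ℚ) - 0 = 0 by ring]
      apply Finset.sum_eq_zero
      intro j hj
      simp only [Finset.mem_range] at hj
      rw [if_pos (by omega)]
      norm_num


lemma Z_sum (N : ℕ) : ∀ t, Z t N = ∑ v ∈ Finset.range (N/2 + 1), w (t + 4*v) (N - 2*v) := by
  induction N using Nat.strong_induction_on with
  | _ N ih =>
    intro t
    match N with
    | 0 =>
      rw [show (0/2 + 1) = 1 from rfl, Finset.sum_range_one]
      show (1:ℚ) = w (t+4*0) (0 - 2*0)
      rw [show t+4*0 = t from rfl, show 0-2*0 = 0 from rfl, w_zero']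
    | 1 =>
      rw [show (1/2 + 1) = 1 from rfl, Finset.sum_range_one]
      show w t 1 = w (t+4*0) (1 - 2*0)
      rfl
    | (M+2) =>
      have e1 : Z t (M+2) = w t (M+2) + Z (t+4) M := rfl
      rw [e1, ih M (by omega) (t+4)]
      rw [show (M+2)/2 + 1 = (M/2 + 1) + 1 by omega]
      rw [Finset.sum_range_succ' (fun v => w (t + 4*v) (M+2 - 2*v)) (M/2+1)]
      have e2 : ∀ v ∈ Finset.range (M/2+1),
          w (t+4 + 4*v) (M - 2*v) = w (t + 4*(v+1)) (M+2 - 2*(v+1)) := by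
        intro v hv
        simp only [Finset.mem_range] at hv
        have h1 : t+4+4*v = t+4*(v+1) := by omega
        have h2 : M - 2*v = M+2-2*(v+1) := by omega
        rw [h1, h2]
      rw [Finset.sum_congr rfl e2]
      have e3 : w (t+4*0) (M+2-2*0) = w t (M+2) := by norm_num
      rw [e3]
      ring

lemma D_eval (n : ℕ) (hn : 3 ≤ n) :
    (∑ k ∈ Finset.range (n - 2), ∑ v ∈ Finset.range (k + 1),
        (choosez (2 * k + 3) ((k : ℤ) - v) : ℚ) *
          choosez (2 * n - 2 * k - 4) ((n : ℤ) - k - v - 2))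
    = Z 3 (n-2) - R 3 (n-2) := by
  set N := n - 2 with hN
  have hN1 : 1 ≤ N := by omega
  have hswap := Finset.sum_Ico_Ico_comm 0 N
    (fun v k => (choosez (2 * k + 3) ((k : ℤ) - v) : ℚ) *
          choosez (2 * n - 2 * k - 4) ((n : ℤ) - k - v - 2))
  simp only [Nat.Ico_zero_eq_range] at hswap
  rw [← hswap]
  -- now per v
  have hinner : ∀ v ∈ Finset.range N,
      (∑ k ∈ Finset.Ico v N,
        (choosez (2 * k + 3) ((k : ℤ) - v) : ℚ) *
          choosez (2 * n - 2 * k - 4) ((n : ℤ) - k - v - 2))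
      = (if 2*v ≤ N then w (3+4*v) (N-2*v) else 0) - (if v = 0 then R 3 N else 0) := by
    intro v hv
    simp only [Finset.mem_range] at hv
    rw [Finset.sum_Ico_eq_sum_range]
    have hstep : ∀ j ∈ Finset.range (N - v),
        (choosez (2 * (v+j) + 3) ((((v+j):ℕ):ℤ) - (v:ℤ)) : ℚ) *
            choosez (2 * n - 2 * (v+j) - 4) ((n : ℤ) - (((v+j):ℕ):ℤ) - (v:ℤ) - 2)
        = R (2*v+3) j * (if ((N:ℤ) - 2*(v:ℤ) - (j:ℤ)) < 0 then 0 else R (2*v) (N-2*v-j)) := by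
      intro j hj
      simp only [Finset.mem_range] at hj
      have hnZ : (n:ℤ) = (N:ℤ) + 2 := by
        rw [hN]; push_cast [Nat.cast_sub (by omega : 2 ≤ n)]; ring
      have e1 : (((v+j):ℕ) : ℤ) - (v:ℤ) = ((j:ℕ) : ℤ) := by push_cast; ring
      have f1 : (choosez (2 * (v+j) + 3) ((((v+j):ℕ):ℤ) - (v:ℤ)) : ℚ) = R (2*v+3) j := by
        rw [e1, choosez_natCast, show 2*(v+j)+3 = 2*j + (2*v+3) by ring]; rfl
      rw [f1]
      congr 1
      by_cases hneg : ((N:ℤ) - 2*(v:ℤ) - (j:ℤ)) < 0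
      · rw [if_pos hneg, choosez_neg]
        · norm_num
        · omega
      · rw [if_neg hneg]
        have e3 : ((n:ℤ) - (((v+j):ℕ):ℤ) - (v:ℤ) - 2) = ((N - 2*v - j : ℕ) : ℤ) := by
          push_cast
          omega
        rw [e3, choosez_natCast]
        have e4 : 2*n - 2*(v+j) - 4 = 2*(N-2*v-j) + 2*v := by omega
        rw [e4]
        rfl
    rw [Finset.sum_congr rfl hstep]
    exact mid N v hv
  rw [Finset.sum_congr rfl hinner, Finset.sum_sub_distrib]
  congr 1
  · -- first part equals Z 3 N
    rw [Z_sum N 3]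
    have hsub : Finset.range (N/2 + 1) ⊆ Finset.range N := by
      apply Finset.range_subset_range.mpr
      omega
    rw [← Finset.sum_subset hsub]
    · apply Finset.sum_congr rfl
      intro v hv
      simp only [Finset.mem_range] at hv
      rw [if_pos (by omega)]
    · intro v hvin hvout
      simp only [Finset.mem_range] at hvin hvout
      rw [if_neg (by omega)]
  · rw [Finset.sum_ite_eq' (Finset.range N) 0 (fun _ => R 3 N)]
    rw [if_pos (by simp [Finset.mem_range]; omega)]


lemma L_eval (n : ℕ) (hn : 3 ≤ n) :
    (∑ k ∈ Finset.range (n - 2),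
        (choosez (2 * k + 1) ((k : ℤ) + 1) : ℚ) *
          choosez (2 * n - 2 * k - 3) ((n : ℤ) - k - 3))
      = w 4 (n-3) := by
  have hstep : ∀ k ∈ Finset.range (n-2),
      (choosez (2 * k + 1) ((k : ℤ) + 1) : ℚ) * choosez (2 * n - 2 * k - 3) ((n : ℤ) - k - 3)
      = R 1 k * R 3 (n-3-k) := by
    intro k hk
    simp only [Finset.mem_range] at hk
    have hk3 : k ≤ n - 3 := by omega
    have e1 : ((k:ℤ) + 1) = ((k+1 : ℕ) : ℤ) := by push_cast; ring
    have e2 : ((n:ℤ) - k - 3) = ((n-3-k : ℕ) : ℤ) := by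
      have : 3 + k ≤ n := by omega
      push_cast [Nat.cast_sub (by omega : k ≤ n - 3), Nat.cast_sub (by omega : 3 ≤ n)]
      ring
    rw [e1, e2, choosez_natCast, choosez_natCast]
    have e3 : (2*k+1).choose (k+1) = (2*k+1).choose k := Nat.choose_symm_half k
    have e4 : 2*n - 2*k - 3 = 2*(n-3-k) + 3 := by omega
    rw [e3, e4]
    rfl
  rw [Finset.sum_congr rfl hstep]
  have : conv 1 3 (n-3) = ∑ k ∈ Finset.range ((n-3)+1), R 1 k * R 3 (n-3-k) := rfl
  rw [show n-2 = (n-3)+1 by omega, ← this, conv_to_w]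

end S2aux

open S2aux

/-- The sum `S₂ = ∑_{k=0}^{n-3} ∑_{v=0}^{k} C(2k+3,k-v) C(2n-2k-4,n-k-v-2)
- ∑_{k=0}^{n-3} C(2k+1,k+1) C(2n-2k-3,n-k-3)` equals
`(n+2)/4 * C(2n,n) - 3·2^{2n-3}`. -/
theorem sum_S2 (n : ℕ) (hn : 3 ≤ n) :
    ((∑ k ∈ Finset.range (n - 2), ∑ v ∈ Finset.range (k + 1),
        (choosez (2 * k + 3) ((k : ℤ) - v) : ℚ) *
          choosez (2 * n - 2 * k - 4) ((n : ℤ) - k - v - 2))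
      - ∑ k ∈ Finset.range (n - 2),
        (choosez (2 * k + 1) ((k : ℤ) + 1) : ℚ) *
          choosez (2 * n - 2 * k - 3) ((n : ℤ) - k - 3))
    = ((n : ℚ) + 2) / 4 * Nat.choose (2 * n) n - 3 * 2 ^ (2 * n - 3) := by
  obtain ⟨M, rfl⟩ : ∃ M, n = M + 3 := ⟨n - 3, by omega⟩
  rw [D_eval (M+3) hn, L_eval (M+3) hn]
  rw [show M+3-2 = M+1 from rfl, show M+3-3 = M from rfl]
  rw [Z3closed, w4, show 2*(M+3)-3 = 2*M+3 from by omega]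
  rw [show ((Nat.choose (2*(M+3)) (M+3) : ℕ) : ℚ) = U (M+3) from rfl]
  have h1 := U_rec (M+1)
  have h2 := U_rec (M+2)
  have h3 := U_rec (M+3)
  have h4 := R3U (M+1)
  have hp1 : (4:ℚ)^(M+1+1) = 4^M*16 := by rw [pow_add, pow_add]; ring
  have hp2 : (2:ℚ)^(2*M+3) = 4^M*8 := by rw [pow_add, pow_mul]; norm_num
  have hp3 : (4:ℚ)^(M+2) = 4^M*16 := by rw [pow_add]; ring
  simp only [show M+1+1 = M+2 from rfl, show M+2+1 = M+3 from rfl, show M+3+1 = M+4 from rfl,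
    show M+1+2 = M+3 from rfl, show M+1+3 = M+4 from rfl] at h1 h2 h3 h4
  push_cast at h1 h2 h3 h4 ⊢
  have hMne : ((M:ℚ)+4) ≠ 0 := by positivity
  apply mul_left_cancel₀ hMne
  linear_combination (-((M:ℚ)+4))*h1 - (((M:ℚ)+4)/4)*h2 + (1/2)*h3 - (1/2)*h4
    - (3/2)*((M:ℚ)+4)*hp3 + 3*((M:ℚ)+4)*hp2 - (1/2)*((M:ℚ)+4)*hp1
end

section
/- For n >= 3, the sum over k from 0 to n-3 of (k+1)*binomial(2n, n-4-2k) equals (n/2)*binomial(2n-2, n-4) - 2^(2n-2) + (2n)! * (3n^2 + n + 2) / (2 * n! * (n+2)!). -/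
open Finset

lemma choosez_neg {a : ℕ} {z : ℤ} (h : z < 0) : choosez a z = 0 := by
  simp [choosez, h]

lemma choosez_natCast (a b : ℕ) : choosez a (b : ℤ) = a.choose b := by
  simp [choosez]

lemma choosez_pascal (a : ℕ) (z : ℤ) : choosez (a+1) z = choosez a (z-1) + choosez a z := by
  rcases lt_trichotomy z 0 with h | h | h
  · rw [choosez_neg h, choosez_neg h, choosez_neg (by omega : z - 1 < 0)]
  · subst h
    simp [choosez, choosez_neg (by omega : (0:ℤ) - 1 < 0)]
  · have h1 : ¬ z < 0 := by omega
    have h2 : ¬ z - 1 < 0 := by omega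
    have h3 : z.toNat = (z-1).toNat + 1 := by omega
    simp only [choosez, if_neg h1, if_neg h2, h3, Nat.choose_succ_succ]

lemma choosez_pascal2 (a : ℕ) (z : ℤ) :
    (choosez (a+2) z : ℚ) = choosez a (z-2) + 2 * choosez a (z-1) + choosez a z := by
  have : a + 2 = (a+1) + 1 := by ring
  rw [this, choosez_pascal, choosez_pascal, choosez_pascal]
  rw [show z - 1 - 1 = z - 2 by ring]
  push_cast
  ring

def Pd (n : ℕ) : ℚ := ∑ k ∈ range n, (choosez (2*n) ((n:ℤ) - 2 - 2*k) : ℚ)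
def Qd (n : ℕ) : ℚ := ∑ k ∈ range n, (choosez (2*n) ((n:ℤ) - 3 - 2*k) : ℚ)
def Sd (n : ℕ) : ℚ := ∑ k ∈ range n, ((k:ℚ)+1) * choosez (2*n) ((n:ℤ) - 4 - 2*k)
def Vd (n : ℕ) : ℚ := ∑ k ∈ range n, ((k:ℚ)+1) * choosez (2*n) ((n:ℤ) - 3 - 2*k)

lemma recP (n : ℕ) :
    Pd (n+1) = 2 * Pd n + 2 * Qd n + choosez (2*n) ((n:ℤ) - 1) := by
  unfold Pd Qd
  have key : ∀ k : ℕ, (choosez (2*(n+1)) ((↑(n+1):ℤ) - 2 - 2*k) : ℚ)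
      = choosez (2*n) ((n:ℤ) - 3 - 2*k) + 2 * choosez (2*n) ((n:ℤ) - 2 - 2*k)
        + choosez (2*n) ((n:ℤ) - 1 - 2*k) := by
    intro k
    rw [show 2*(n+1) = 2*n + 2 by ring,
        show (↑(n+1):ℤ) - 2 - 2*k = (n:ℤ) - 1 - 2*k by push_cast; ring,
        choosez_pascal2,
        show (n:ℤ) - 1 - 2*k - 2 = (n:ℤ) - 3 - 2*k by ring,
        show (n:ℤ) - 1 - 2*k - 1 = (n:ℤ) - 2 - 2*k by ring]
  simp only [key]
  rw [Finset.sum_add_distrib, Finset.sum_add_distrib, ← Finset.mul_sum]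
  rw [Finset.sum_range_succ (fun k => (choosez (2*n) ((n:ℤ) - 3 - 2*k) : ℚ)),
      Finset.sum_range_succ (fun k => (choosez (2*n) ((n:ℤ) - 2 - 2*k) : ℚ)),
      Finset.sum_range_succ' (fun k => (choosez (2*n) ((n:ℤ) - 1 - 2*k) : ℚ))]
  rw [choosez_neg (by omega : (n:ℤ) - 3 - 2*(n:ℕ) < 0),
      choosez_neg (by omega : (n:ℤ) - 2 - 2*(n:ℕ) < 0)]
  have key2 : ∀ k : ℕ, (choosez (2*n) ((n:ℤ) - 1 - 2*(↑(k+1):ℤ)) : ℚ)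
      = choosez (2*n) ((n:ℤ) - 3 - 2*k) := by
    intro k
    rw [show (n:ℤ) - 1 - 2*(↑(k+1):ℤ) = (n:ℤ) - 3 - 2*k by push_cast; ring]
  simp only [key2]
  rw [show (n:ℤ) - 1 - 2*((0:ℕ):ℤ) = (n:ℤ) - 1 by push_cast; ring]
  push_cast
  ring

lemma recQ (n : ℕ) :
    Qd (n+1) = 2 * Pd n + 2 * Qd n - choosez (2*n) ((n:ℤ) - 2) := by
  unfold Qd Pd
  have key : ∀ k : ℕ, (choosez (2*(n+1)) ((↑(n+1):ℤ) - 3 - 2*k) : ℚ)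
      = choosez (2*n) ((n:ℤ) - 4 - 2*k) + 2 * choosez (2*n) ((n:ℤ) - 3 - 2*k)
        + choosez (2*n) ((n:ℤ) - 2 - 2*k) := by
    intro k
    rw [show 2*(n+1) = 2*n + 2 by ring,
        show (↑(n+1):ℤ) - 3 - 2*k = (n:ℤ) - 2 - 2*k by push_cast; ring,
        choosez_pascal2,
        show (n:ℤ) - 2 - 2*k - 2 = (n:ℤ) - 4 - 2*k by ring,
        show (n:ℤ) - 2 - 2*k - 1 = (n:ℤ) - 3 - 2*k by ring]
  simp only [key]
  rw [Finset.sum_add_distrib, Finset.sum_add_distrib, ← Finset.mul_sum]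
  have hB : (∑ k ∈ range (n+1), (choosez (2*n) ((n:ℤ) - 4 - 2*k) : ℚ))
      = (∑ k ∈ range n, (choosez (2*n) ((n:ℤ) - 2 - 2*k) : ℚ)) - choosez (2*n) ((n:ℤ) - 2) := by
    have h := Finset.sum_range_succ' (fun k => (choosez (2*n) ((n:ℤ) - 2 - 2*k) : ℚ)) (n+1)
    simp only [show ∀ k : ℕ, (n:ℤ) - 2 - 2*(↑(k+1):ℤ) = (n:ℤ) - 4 - 2*k from
      fun k => by push_cast; ring] at h
    rw [Finset.sum_range_succ, Finset.sum_range_succ,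
        choosez_neg (by omega : (n:ℤ) - 2 - 2*((n:ℕ):ℤ) < 0),
        choosez_neg (by omega : (n:ℤ) - 2 - 2*(↑(n+1):ℤ) < 0),
        show (n:ℤ) - 2 - 2*((0:ℕ):ℤ) = (n:ℤ) - 2 by push_cast; ring] at h
    push_cast at h ⊢
    linarith
  rw [hB,
      Finset.sum_range_succ (fun k => (choosez (2*n) ((n:ℤ) - 3 - 2*k) : ℚ)),
      Finset.sum_range_succ (fun k => (choosez (2*n) ((n:ℤ) - 2 - 2*k) : ℚ)),
      choosez_neg (by omega : (n:ℤ) - 3 - 2*((n:ℕ):ℤ) < 0),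
      choosez_neg (by omega : (n:ℤ) - 2 - 2*((n:ℕ):ℤ) < 0)]
  push_cast
  ring

lemma recS (n : ℕ) :
    Sd (n+1) = 2 * Sd n + 2 * Vd n - Qd n := by
  unfold Sd Vd Qd
  have key : ∀ k : ℕ, ((k:ℚ)+1) * choosez (2*(n+1)) ((↑(n+1):ℤ) - 4 - 2*k)
      = ((k:ℚ)+1) * choosez (2*n) ((n:ℤ) - 5 - 2*k)
        + 2 * (((k:ℚ)+1) * choosez (2*n) ((n:ℤ) - 4 - 2*k))
        + ((k:ℚ)+1) * choosez (2*n) ((n:ℤ) - 3 - 2*k) := by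
    intro k
    rw [show 2*(n+1) = 2*n + 2 by ring,
        show (↑(n+1):ℤ) - 4 - 2*k = (n:ℤ) - 3 - 2*k by push_cast; ring,
        choosez_pascal2,
        show (n:ℤ) - 3 - 2*k - 2 = (n:ℤ) - 5 - 2*k by ring,
        show (n:ℤ) - 3 - 2*k - 1 = (n:ℤ) - 4 - 2*k by ring]
    ring
  simp only [key]
  rw [Finset.sum_add_distrib, Finset.sum_add_distrib, ← Finset.mul_sum]
  have hW : (∑ k ∈ range (n+1), ((k:ℚ)+1) * choosez (2*n) ((n:ℤ) - 5 - 2*k))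
      = (∑ k ∈ range n, ((k:ℚ)+1) * choosez (2*n) ((n:ℤ) - 3 - 2*k))
        - ∑ k ∈ range n, (choosez (2*n) ((n:ℤ) - 3 - 2*k) : ℚ) := by
    have h := Finset.sum_range_succ' (fun k => (k:ℚ) * choosez (2*n) ((n:ℤ) - 3 - 2*k)) (n+1)
    simp only [show ∀ k : ℕ, (n:ℤ) - 3 - 2*(↑(k+1):ℤ) = (n:ℤ) - 5 - 2*k from
      fun k => by push_cast; ring] at h
    push_cast at h
    simp only [show ∀ k : ℕ, ∀ c : ℚ, (k:ℚ) * c = ((k:ℚ)+1) * c - c from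
      fun k c => by ring] at h
    rw [Finset.sum_sub_distrib, Finset.sum_range_succ, Finset.sum_range_succ,
        Finset.sum_range_succ (fun k => (choosez (2*n) ((n:ℤ) - 3 - 2*k) : ℚ)),
        Finset.sum_range_succ (fun k => (choosez (2*n) ((n:ℤ) - 3 - 2*k) : ℚ)),
        choosez_neg (by omega : (n:ℤ) - 3 - 2*((n:ℕ):ℤ) < 0),
        choosez_neg (by omega : (n:ℤ) - 3 - 2*(↑(n+1):ℤ) < 0)] at h
    push_cast at h ⊢
    linarith
  rw [hW,
      Finset.sum_range_succ (fun k => ((k:ℚ)+1) * choosez (2*n) ((n:ℤ) - 4 - 2*k)),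
      Finset.sum_range_succ (fun k => ((k:ℚ)+1) * choosez (2*n) ((n:ℤ) - 3 - 2*k)),
      choosez_neg (by omega : (n:ℤ) - 4 - 2*((n:ℕ):ℤ) < 0),
      choosez_neg (by omega : (n:ℤ) - 3 - 2*((n:ℕ):ℤ) < 0)]
  push_cast
  ring

lemma recV (n : ℕ) :
    Vd (n+1) = 2 * Sd n + 2 * Vd n + Pd n := by
  unfold Vd Sd Pd
  have key : ∀ k : ℕ, ((k:ℚ)+1) * choosez (2*(n+1)) ((↑(n+1):ℤ) - 3 - 2*k)
      = ((k:ℚ)+1) * choosez (2*n) ((n:ℤ) - 4 - 2*k)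
        + 2 * (((k:ℚ)+1) * choosez (2*n) ((n:ℤ) - 3 - 2*k))
        + ((k:ℚ)+1) * choosez (2*n) ((n:ℤ) - 2 - 2*k) := by
    intro k
    rw [show 2*(n+1) = 2*n + 2 by ring,
        show (↑(n+1):ℤ) - 3 - 2*k = (n:ℤ) - 2 - 2*k by push_cast; ring,
        choosez_pascal2,
        show (n:ℤ) - 2 - 2*k - 2 = (n:ℤ) - 4 - 2*k by ring,
        show (n:ℤ) - 2 - 2*k - 1 = (n:ℤ) - 3 - 2*k by ring]
    ring
  simp only [key]
  rw [Finset.sum_add_distrib, Finset.sum_add_distrib, ← Finset.mul_sum]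
  have hW2 : (∑ k ∈ range (n+1), ((k:ℚ)+1) * choosez (2*n) ((n:ℤ) - 2 - 2*k))
      = (∑ k ∈ range n, ((k:ℚ)+1) * choosez (2*n) ((n:ℤ) - 4 - 2*k))
        + ∑ k ∈ range n, (choosez (2*n) ((n:ℤ) - 2 - 2*k) : ℚ) := by
    have expand : (∑ k ∈ range (n+1), ((k:ℚ)+1) * choosez (2*n) ((n:ℤ) - 2 - 2*k))
        = (∑ k ∈ range (n+1), (k:ℚ) * choosez (2*n) ((n:ℤ) - 2 - 2*k))
          + ∑ k ∈ range (n+1), (choosez (2*n) ((n:ℤ) - 2 - 2*k) : ℚ) := by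
      rw [← Finset.sum_add_distrib]
      exact Finset.sum_congr rfl (fun k _ => by ring)
    rw [expand]
    have h := Finset.sum_range_succ' (fun k => (k:ℚ) * choosez (2*n) ((n:ℤ) - 2 - 2*k)) n
    simp only [show ∀ k : ℕ, (n:ℤ) - 2 - 2*(↑(k+1):ℤ) = (n:ℤ) - 4 - 2*k from
      fun k => by push_cast; ring] at h
    push_cast at h
    rw [h,
        Finset.sum_range_succ (fun k => (choosez (2*n) ((n:ℤ) - 2 - 2*k) : ℚ)),
        choosez_neg (by omega : (n:ℤ) - 2 - 2*((n:ℕ):ℤ) < 0),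
        show (n:ℤ) - 2 - 0 = (n:ℤ) - 2 by ring]
    push_cast
    ring
  rw [hW2,
      Finset.sum_range_succ (fun k => ((k:ℚ)+1) * choosez (2*n) ((n:ℤ) - 4 - 2*k)),
      Finset.sum_range_succ (fun k => ((k:ℚ)+1) * choosez (2*n) ((n:ℤ) - 3 - 2*k)),
      choosez_neg (by omega : (n:ℤ) - 4 - 2*((n:ℕ):ℤ) < 0),
      choosez_neg (by omega : (n:ℤ) - 3 - 2*((n:ℕ):ℤ) < 0)]
  push_cast
  ring

def cpm (m : ℕ) : ℚ := (((4:ℚ)^(m+4) - (Nat.choose (2*m+8) (m+4) : ℚ))/2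
  - Nat.choose (2*m+8) (m+3) + Nat.choose (2*m+6) (m+2) + Nat.choose (2*m+6) (m+1))/2
def cqm (m : ℕ) : ℚ := (((4:ℚ)^(m+4) - (Nat.choose (2*m+8) (m+4) : ℚ))/2
  - Nat.choose (2*m+8) (m+3) - Nat.choose (2*m+6) (m+2) - Nat.choose (2*m+6) (m+1))/2
def csm (m : ℕ) : ℚ := ((m:ℚ)+4)/2 * Nat.choose (2*m+6) m - 4^(m+3)
  + (Nat.factorial (2*m+8) : ℚ) * (3*((m:ℚ)+4)^2 + ((m:ℚ)+4) + 2)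
    / (2 * Nat.factorial (m+4) * Nat.factorial (m+6))
def cvm (m : ℕ) : ℚ := csm m + ((4:ℚ)^(m+3) - (Nat.choose (2*m+6) (m+3) : ℚ))/2
  - Nat.choose (2*m+6) (m+2)

lemma base0 : Pd 4 = cpm 0 ∧ Qd 4 = cqm 0 ∧ Sd 4 = csm 0 ∧ Vd 4 = cvm 0 := by
  refine ⟨?_, ?_, ?_, ?_⟩ <;>
  · simp [Pd, Qd, Sd, Vd, cpm, cqm, csm, cvm, choosez, Finset.sum_range_succ, Nat.factorial]
    norm_num [Nat.choose]

lemma cc' (a b c : ℕ) (h : a = b + c) :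
    ((a.choose b : ℕ) : ℚ) = a.factorial / (b.factorial * c.factorial) := by
  subst h
  rw [Nat.cast_choose ℚ (Nat.le_add_right b c), Nat.add_sub_cancel_left]

lemma factq (a : ℕ) : (Nat.factorial (a+1) : ℚ) = ((a:ℚ)+1) * Nat.factorial a := by
  rw [Nat.factorial_succ]; push_cast; ring

set_option maxHeartbeats 2000000 in
lemma stepP (m : ℕ) :
    2 * cpm m + 2 * cqm m + (Nat.choose (2*m+8) (m+3) : ℚ) = cpm (m+1) := by
  have hf1 : (Nat.factorial m : ℚ) ≠ 0 := Nat.cast_ne_zero.mpr (Nat.factorial_ne_zero m)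
  have hf2 : (Nat.factorial (2*m+6) : ℚ) ≠ 0 := Nat.cast_ne_zero.mpr (Nat.factorial_ne_zero _)
  simp only [cpm, cqm]
  simp only [show 2*(m+1)+8 = 2*m+10 by ring, show 2*(m+1)+6 = 2*m+8 by ring,
    show (m+1)+4 = m+5 by ring, show (m+1)+3 = m+4 by ring, show (m+1)+2 = m+3 by ring,
    show (m+1)+1 = m+2 by ring, show (m+1)+6 = m+7 by ring]
  simp only [cc' (2*m+10) (m+5) (m+5) (by ring), cc' (2*m+10) (m+4) (m+6) (by ring),
    cc' (2*m+8) (m+4) (m+4) (by ring), cc' (2*m+8) (m+3) (m+5) (by ring),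
    cc' (2*m+8) (m+2) (m+6) (by ring), cc' (2*m+6) (m+2) (m+4) (by ring),
    cc' (2*m+6) (m+1) (m+5) (by ring), cc' (2*m+6) (m+3) (m+3) (by ring),
    cc' (2*m+6) (m) (m+6) (by ring)]
  simp only [show m+7 = (m+6)+1 by ring, show m+6 = (m+5)+1 by ring,
    show m+5 = (m+4)+1 by ring, show m+4 = (m+3)+1 by ring, show m+3 = (m+2)+1 by ring,
    show m+2 = (m+1)+1 by ring, show 2*m+10 = (2*m+9)+1 by ring,
    show 2*m+9 = (2*m+8)+1 by ring, show 2*m+8 = (2*m+7)+1 by ring,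
    show 2*m+7 = (2*m+6)+1 by ring, factq]
  have h1 : ((m:ℚ)+1) ≠ 0 := by positivity
  have h2 : ((m:ℚ)+2) ≠ 0 := by positivity
  have h3 : ((m:ℚ)+3) ≠ 0 := by positivity
  have h4 : ((m:ℚ)+4) ≠ 0 := by positivity
  have h5 : ((m:ℚ)+5) ≠ 0 := by positivity
  have h6 : ((m:ℚ)+6) ≠ 0 := by positivity
  have h7 : ((m:ℚ)+7) ≠ 0 := by positivity
  have g7 : (2*(m:ℚ)+7) ≠ 0 := by positivity
  have g8 : (2*(m:ℚ)+8) ≠ 0 := by positivity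
  have g9 : (2*(m:ℚ)+9) ≠ 0 := by positivity
  have g10 : (2*(m:ℚ)+10) ≠ 0 := by positivity
  push_cast
  field_simp
  ring

set_option maxHeartbeats 2000000 in
lemma stepQ (m : ℕ) :
    2 * cpm m + 2 * cqm m - (Nat.choose (2*m+8) (m+2) : ℚ) = cqm (m+1) := by
  have hf1 : (Nat.factorial m : ℚ) ≠ 0 := Nat.cast_ne_zero.mpr (Nat.factorial_ne_zero m)
  have hf2 : (Nat.factorial (2*m+6) : ℚ) ≠ 0 := Nat.cast_ne_zero.mpr (Nat.factorial_ne_zero _)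
  simp only [cpm, cqm, csm, cvm]
  simp only [show 2*(m+1)+8 = 2*m+10 by ring, show 2*(m+1)+6 = 2*m+8 by ring,
    show (m+1)+4 = m+5 by ring, show (m+1)+3 = m+4 by ring, show (m+1)+2 = m+3 by ring,
    show (m+1)+1 = m+2 by ring, show (m+1)+6 = m+7 by ring]
  simp only [cc' (2*m+10) (m+5) (m+5) (by ring), cc' (2*m+10) (m+4) (m+6) (by ring),
    cc' (2*m+8) (m+4) (m+4) (by ring), cc' (2*m+8) (m+3) (m+5) (by ring),
    cc' (2*m+8) (m+2) (m+6) (by ring), cc' (2*m+6) (m+2) (m+4) (by ring),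
    cc' (2*m+6) (m+1) (m+5) (by ring), cc' (2*m+6) (m+3) (m+3) (by ring),
    cc' (2*m+8) (m+1) (m+7) (by ring),
    cc' (2*m+6) (m) (m+6) (by ring)]
  simp only [show m+7 = (m+6)+1 by ring, show m+6 = (m+5)+1 by ring,
    show m+5 = (m+4)+1 by ring, show m+4 = (m+3)+1 by ring, show m+3 = (m+2)+1 by ring,
    show m+2 = (m+1)+1 by ring, show 2*m+10 = (2*m+9)+1 by ring,
    show 2*m+9 = (2*m+8)+1 by ring, show 2*m+8 = (2*m+7)+1 by ring,
    show 2*m+7 = (2*m+6)+1 by ring, factq]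
  have h1 : ((m:ℚ)+1) ≠ 0 := by positivity
  have h2 : ((m:ℚ)+2) ≠ 0 := by positivity
  have h3 : ((m:ℚ)+3) ≠ 0 := by positivity
  have h4 : ((m:ℚ)+4) ≠ 0 := by positivity
  have h5 : ((m:ℚ)+5) ≠ 0 := by positivity
  have h6 : ((m:ℚ)+6) ≠ 0 := by positivity
  have h7 : ((m:ℚ)+7) ≠ 0 := by positivity
  have g7 : (2*(m:ℚ)+7) ≠ 0 := by positivity
  have g8 : (2*(m:ℚ)+8) ≠ 0 := by positivity
  have g9 : (2*(m:ℚ)+9) ≠ 0 := by positivity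
  have g10 : (2*(m:ℚ)+10) ≠ 0 := by positivity
  push_cast
  field_simp
  ring

set_option maxHeartbeats 2000000 in
lemma stepS (m : ℕ) :
    2 * csm m + 2 * cvm m - cqm m = csm (m+1) := by
  have hf1 : (Nat.factorial m : ℚ) ≠ 0 := Nat.cast_ne_zero.mpr (Nat.factorial_ne_zero m)
  have hf2 : (Nat.factorial (2*m+6) : ℚ) ≠ 0 := Nat.cast_ne_zero.mpr (Nat.factorial_ne_zero _)
  simp only [cpm, cqm, csm, cvm]
  simp only [show 2*(m+1)+8 = 2*m+10 by ring, show 2*(m+1)+6 = 2*m+8 by ring,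
    show (m+1)+4 = m+5 by ring, show (m+1)+3 = m+4 by ring, show (m+1)+2 = m+3 by ring,
    show (m+1)+1 = m+2 by ring, show (m+1)+6 = m+7 by ring]
  simp only [cc' (2*m+10) (m+5) (m+5) (by ring), cc' (2*m+10) (m+4) (m+6) (by ring),
    cc' (2*m+8) (m+4) (m+4) (by ring), cc' (2*m+8) (m+3) (m+5) (by ring),
    cc' (2*m+8) (m+2) (m+6) (by ring), cc' (2*m+6) (m+2) (m+4) (by ring),
    cc' (2*m+6) (m+1) (m+5) (by ring), cc' (2*m+6) (m+3) (m+3) (by ring),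
    cc' (2*m+8) (m+1) (m+7) (by ring),
    cc' (2*m+6) (m) (m+6) (by ring)]
  simp only [show m+7 = (m+6)+1 by ring, show m+6 = (m+5)+1 by ring,
    show m+5 = (m+4)+1 by ring, show m+4 = (m+3)+1 by ring, show m+3 = (m+2)+1 by ring,
    show m+2 = (m+1)+1 by ring, show 2*m+10 = (2*m+9)+1 by ring,
    show 2*m+9 = (2*m+8)+1 by ring, show 2*m+8 = (2*m+7)+1 by ring,
    show 2*m+7 = (2*m+6)+1 by ring, factq]
  have h1 : ((m:ℚ)+1) ≠ 0 := by positivity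
  have h2 : ((m:ℚ)+2) ≠ 0 := by positivity
  have h3 : ((m:ℚ)+3) ≠ 0 := by positivity
  have h4 : ((m:ℚ)+4) ≠ 0 := by positivity
  have h5 : ((m:ℚ)+5) ≠ 0 := by positivity
  have h6 : ((m:ℚ)+6) ≠ 0 := by positivity
  have h7 : ((m:ℚ)+7) ≠ 0 := by positivity
  have g7 : (2*(m:ℚ)+7) ≠ 0 := by positivity
  have g8 : (2*(m:ℚ)+8) ≠ 0 := by positivity
  have g9 : (2*(m:ℚ)+9) ≠ 0 := by positivity
  have g10 : (2*(m:ℚ)+10) ≠ 0 := by positivity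
  push_cast
  field_simp
  ring

set_option maxHeartbeats 2000000 in
lemma stepV (m : ℕ) :
    2 * csm m + 2 * cvm m + cpm m = cvm (m+1) := by
  have hf1 : (Nat.factorial m : ℚ) ≠ 0 := Nat.cast_ne_zero.mpr (Nat.factorial_ne_zero m)
  have hf2 : (Nat.factorial (2*m+6) : ℚ) ≠ 0 := Nat.cast_ne_zero.mpr (Nat.factorial_ne_zero _)
  simp only [cpm, cqm, csm, cvm]
  simp only [show 2*(m+1)+8 = 2*m+10 by ring, show 2*(m+1)+6 = 2*m+8 by ring,
    show (m+1)+4 = m+5 by ring, show (m+1)+3 = m+4 by ring, show (m+1)+2 = m+3 by ring,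
    show (m+1)+1 = m+2 by ring, show (m+1)+6 = m+7 by ring]
  simp only [cc' (2*m+10) (m+5) (m+5) (by ring), cc' (2*m+10) (m+4) (m+6) (by ring),
    cc' (2*m+8) (m+4) (m+4) (by ring), cc' (2*m+8) (m+3) (m+5) (by ring),
    cc' (2*m+8) (m+2) (m+6) (by ring), cc' (2*m+6) (m+2) (m+4) (by ring),
    cc' (2*m+6) (m+1) (m+5) (by ring), cc' (2*m+6) (m+3) (m+3) (by ring),
    cc' (2*m+8) (m+1) (m+7) (by ring),
    cc' (2*m+6) (m) (m+6) (by ring)]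
  simp only [show m+7 = (m+6)+1 by ring, show m+6 = (m+5)+1 by ring,
    show m+5 = (m+4)+1 by ring, show m+4 = (m+3)+1 by ring, show m+3 = (m+2)+1 by ring,
    show m+2 = (m+1)+1 by ring, show 2*m+10 = (2*m+9)+1 by ring,
    show 2*m+9 = (2*m+8)+1 by ring, show 2*m+8 = (2*m+7)+1 by ring,
    show 2*m+7 = (2*m+6)+1 by ring, factq]
  have h1 : ((m:ℚ)+1) ≠ 0 := by positivity
  have h2 : ((m:ℚ)+2) ≠ 0 := by positivity
  have h3 : ((m:ℚ)+3) ≠ 0 := by positivity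
  have h4 : ((m:ℚ)+4) ≠ 0 := by positivity
  have h5 : ((m:ℚ)+5) ≠ 0 := by positivity
  have h6 : ((m:ℚ)+6) ≠ 0 := by positivity
  have h7 : ((m:ℚ)+7) ≠ 0 := by positivity
  have g7 : (2*(m:ℚ)+7) ≠ 0 := by positivity
  have g8 : (2*(m:ℚ)+8) ≠ 0 := by positivity
  have g9 : (2*(m:ℚ)+9) ≠ 0 := by positivity
  have g10 : (2*(m:ℚ)+10) ≠ 0 := by positivity
  push_cast
  field_simp
  ring


lemma main_ind (m : ℕ) : Pd (m+4) = cpm m ∧ Qd (m+4) = cqm m ∧ Sd (m+4) = csm m ∧ Vd (m+4) = cvm m := by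
  induction m with
  | zero => exact base0
  | succ m ih =>
    obtain ⟨hP, hQ, hS, hV⟩ := ih
    have e1 : choosez (2*(m+4)) ((↑(m+4):ℤ) - 1) = Nat.choose (2*m+8) (m+3) := by
      rw [show ((↑(m+4):ℤ) - 1) = ((m+3:ℕ):ℤ) by push_cast; ring, choosez_natCast,
          show 2*(m+4) = 2*m+8 by ring]
    have e2 : choosez (2*(m+4)) ((↑(m+4):ℤ) - 2) = Nat.choose (2*m+8) (m+2) := by
      rw [show ((↑(m+4):ℤ) - 2) = ((m+2:ℕ):ℤ) by push_cast; ring, choosez_natCast,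
          show 2*(m+4) = 2*m+8 by ring]
    rw [show m+1+4 = (m+4)+1 by omega]
    refine ⟨?_, ?_, ?_, ?_⟩
    · rw [recP, hP, hQ, e1]; exact stepP m
    · rw [recQ, hP, hQ, e2]; exact stepQ m
    · rw [recS, hS, hV, hQ]; exact stepS m
    · rw [recV, hS, hV, hP]; exact stepV m

/-- `∑_{k=0}^{n-3} (k+1) C(2n, n-4-2k)
= (n/2) C(2n-2, n-4) - 2^{2n-2} + (2n)!(3n²+n+2)/(2 n! (n+2)!)`. -/
theorem sum_S3 (n : ℕ) (hn : 3 ≤ n) :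
    (∑ k ∈ Finset.range (n - 2), ((k : ℚ) + 1) * choosez (2 * n) ((n : ℤ) - 4 - 2 * k))
    = (n : ℚ) / 2 * choosez (2 * n - 2) ((n : ℤ) - 4) - 2 ^ (2 * n - 2)
      + (Nat.factorial (2 * n) : ℚ) * (3 * (n : ℚ) ^ 2 + n + 2)
        / (2 * Nat.factorial n * Nat.factorial (n + 2)) := by
  rcases Nat.lt_or_ge n 4 with h4 | h4
  · have hn3 : n = 3 := by omega
    subst hn3
    norm_num [choosez, Nat.factorial]
  · obtain ⟨m, rfl⟩ : ∃ m, n = m + 4 := ⟨n - 4, by omega⟩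
    have hS := (main_ind m).2.2.1
    have hL : Sd (m+4)
        = ∑ k ∈ Finset.range (m+4-2), ((k : ℚ) + 1) * choosez (2 * (m+4)) ((↑(m+4) : ℤ) - 4 - 2 * k) := by
      unfold Sd
      rw [show m+4 = ((m+4-2)+1)+1 by omega, Finset.sum_range_succ, Finset.sum_range_succ]
      rw [show ((m+4-2)+1)+1 = m+4 by omega]
      rw [choosez_neg (by omega : (↑(m+4):ℤ) - 4 - 2*(↑(m+4-2):ℤ) < 0),
          choosez_neg (by omega : (↑(m+4):ℤ) - 4 - 2*(↑((m+4-2)+1):ℤ) < 0)]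
      push_cast
      ring
    rw [← hL, hS]
    rw [show 2*(m+4)-2 = 2*m+6 by omega, show 2*(m+4) = 2*m+8 by ring,
        show m+4+2 = m+6 by ring,
        show ((↑(m+4):ℤ) - 4) = ((m:ℕ):ℤ) by push_cast; ring, choosez_natCast,
        show (2:ℚ)^(2*m+6) = 4^(m+3) by rw [show 2*m+6 = 2*(m+3) by ring, pow_mul]; norm_num]
    simp only [csm]
    push_cast
    ring
end

section
/- For n >= 1, the sum over i from 1 to n-1 and over r from 1 to i of C^{i-1+r}_{i-r} * C^{n-i+r-1}_{n-i-r} equals (n-1) times the (n-1)-st Catalan number, where C^m_k = ((m-k+1)/(m+1)) * binomial(m+k, k). -/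
/-- The Catalan triangle number `C^m_k = ((m-k+1)/(m+1)) * C(m+k, k)` with integer lower
index `k`, vanishing for `k < 0`. -/
def catTz (m : ℕ) (k : ℤ) : ℚ :=
  if k < 0 then 0
  else (((m : ℚ) - (k : ℚ) + 1) / ((m : ℚ) + 1)) * Nat.choose (m + k.toNat) k.toNat

/-!
The ballot number `ballot m r = C(2m-1, m-r) - C(2m-1, m-r-1)` is, for `r ≥ 1`, the Catalan
triangle entry `C^{m-1+r}_{m-r}`, so with `j = n - i` the inner sum is
`∑_{r ≥ 1} ballot i r * ballot j r`. As `ballot m` is odd in `r`, this is half the sum over all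
`r ∈ ℤ`; expanding the product gives four Vandermonde convolutions, which add up to
`2 (C(2N, N) - C(2N, N+1)) = 2 C_N` with `N = i + j - 1 = n - 1`. So each of the `n - 1` inner
sums equals `C_{n-1}`.
-/

open Finset

def intChoose (n : ℕ) (k : ℤ) : ℕ :=
  if k < 0 then 0 else n.choose k.toNat

theorem intChoose_of_neg {n : ℕ} {k : ℤ} (hk : k < 0) : intChoose n k = 0 :=
  if_pos hk

@[simp]
theorem intChoose_natCast (n k : ℕ) : intChoose n k = n.choose k := by
  simp [intChoose]

theorem intChoose_of_lt {n : ℕ} {k : ℤ} (hk : n < k) : intChoose n k = 0 := by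
  lift k to ℕ using by omega
  rw [intChoose_natCast, Nat.choose_eq_zero_of_lt (by omega)]

theorem intChoose_symm (n : ℕ) (k : ℤ) : intChoose n (n - k) = intChoose n k := by
  rcases lt_or_ge k 0 with hk | hk
  · rw [intChoose_of_neg hk, intChoose_of_lt (by omega)]
  rcases lt_or_ge (n : ℤ) k with hkn | hkn
  · rw [intChoose_of_neg (by omega), intChoose_of_lt hkn]
  lift k to ℕ using hk
  rw [← Nat.cast_sub (by omega), intChoose_natCast, intChoose_natCast,
    Nat.choose_symm (by omega)]

theorem intChoose_succ_mul (n : ℕ) (k : ℤ) :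
    (intChoose n (k + 1) : ℤ) * (k + 1) = intChoose n k * (n - k) := by
  rcases lt_or_ge k 0 with hk | hk
  · rw [intChoose_of_neg hk]
    obtain rfl | hk' : k = -1 ∨ k + 1 < 0 := by omega
    · simp
    · simp [intChoose_of_neg hk']
  lift k to ℕ using hk
  rcases le_or_gt k n with hkn | hkn
  · have h := Nat.choose_succ_right_eq n k
    zify [hkn] at h
    rwa [← Nat.cast_succ, intChoose_natCast, intChoose_natCast, Nat.cast_succ]
  · rw [intChoose_of_lt (by omega), intChoose_natCast, Nat.choose_eq_zero_of_lt hkn]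
    simp

theorem sum_intChoose_mul_intChoose_sub (m n : ℕ) (t : ℤ) {s : Finset ℤ} (hs : Icc 0 t ⊆ s) :
    ∑ k ∈ s, intChoose m k * intChoose n (t - k) = intChoose (m + n) t := by
  rw [← sum_subset hs]
  swap
  · intro k _ hk
    rw [mem_Icc, not_and_or, not_le, not_le] at hk
    rcases hk with hk | hk
    · rw [intChoose_of_neg hk, zero_mul]
    · rw [intChoose_of_neg (by omega : t - k < 0), mul_zero]
  rcases lt_or_ge t 0 with ht | ht
  · rw [Icc_eq_empty_of_lt ht, sum_empty, intChoose_of_neg ht]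
  lift t to ℕ using ht
  rw [intChoose_natCast, Nat.add_choose_eq, Nat.sum_antidiagonal_eq_sum_range_succ
    (fun i j => m.choose i * n.choose j)]
  refine sum_nbij' Int.toNat Nat.cast ?_ ?_ ?_ ?_ ?_
  · intro k hk; simp only [mem_Icc, mem_range] at hk ⊢; omega
  · intro k hk; simp only [mem_Icc, mem_range] at hk ⊢; omega
  · intro k hk; simp only [mem_Icc] at hk; omega
  · intro k _; simp
  · intro k hk
    simp only [mem_Icc] at hk
    lift k to ℕ using hk.1
    rw [← Nat.cast_sub (by omega), intChoose_natCast, intChoose_natCast, Int.toNat_natCast]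

theorem sum_intChoose_sub_mul_intChoose_sub (a b : ℕ) (x y : ℤ) {K : ℤ} (hx : x ≤ K)
    (hy : b - y ≤ K) :
    ∑ r ∈ Icc (-K) K, intChoose a (x - r) * intChoose b (y - r) =
      intChoose (a + b) (x + b - y) := by
  rw [← sum_intChoose_mul_intChoose_sub a b (x + b - y) (s := Icc (x - K) (x + K))]
  · refine sum_nbij' (x - ·) (x - ·) ?_ ?_ ?_ ?_ ?_
    · intro r hr; simp only [mem_Icc] at hr ⊢; omega
    · intro r hr; simp only [mem_Icc] at hr ⊢; omega
    · intro r _; simp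
    · intro r _; simp
    · intro r _
      rw [← intChoose_symm b (y - r)]
      congr 2; ring
  · intro k hk; simp only [mem_Icc] at hk ⊢; omega

theorem sum_Icc_neg_eq_two_nsmul {M : Type*} [AddCommMonoid M] (f : ℤ → M)
    (hf : ∀ r, f (-r) = f r) (hf0 : f 0 = 0) (K : ℕ) :
    ∑ r ∈ Icc (-(K : ℤ)) K, f r = 2 • ∑ r ∈ Icc 1 K, f r := by
  induction K with
  | zero => simp [hf0]
  | succ K ih =>
    have hIcc : Icc (-((K + 1 : ℕ) : ℤ)) (K + 1 : ℕ) =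
        insert (-((K + 1 : ℕ) : ℤ)) (insert ((K + 1 : ℕ) : ℤ) (Icc (-(K : ℤ)) K)) := by
      ext r; simp only [mem_insert, mem_Icc]; omega
    rw [hIcc, sum_insert (by simp only [mem_insert, mem_Icc]; omega), sum_insert (by simp), ih,
      sum_Icc_succ_top (by omega), hf, nsmul_add, two_nsmul (f _)]
    abel

theorem catalan_add_choose_succ (N : ℕ) :
    catalan N + (2 * N).choose (N + 1) = (2 * N).choose N := by
  have hcat := succ_mul_catalan_eq_centralBinom N
  have hsucc := Nat.choose_succ_right_eq (2 * N) N
  rw [Nat.centralBinom_eq_two_mul_choose] at hcat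
  rw [show 2 * N - N = N by omega] at hsucc
  apply Nat.eq_of_mul_eq_mul_left N.succ_pos
  linarith

def ballot (m : ℕ) (r : ℤ) : ℤ :=
  intChoose (2 * m - 1) (m - r) - intChoose (2 * m - 1) (m - 1 - r)

theorem ballot_neg {m : ℕ} (hm : 1 ≤ m) (r : ℤ) : ballot m (-r) = -ballot m r := by
  have hsymm (k : ℤ) : intChoose (2 * m - 1) k = intChoose (2 * m - 1) (2 * m - 1 - k) := by
    rw [← intChoose_symm (2 * m - 1) k]; congr 1; omega
  rw [ballot, ballot, hsymm (m - -r), hsymm (m - 1 - -r)]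
  ring_nf

theorem ballot_zero {m : ℕ} (hm : 1 ≤ m) : ballot m 0 = 0 := by
  have h := ballot_neg hm 0
  rw [neg_zero] at h
  linarith

theorem ballot_of_lt {m : ℕ} {r : ℤ} (h : m < r) : ballot m r = 0 := by
  rw [ballot, intChoose_of_neg (by omega), intChoose_of_neg (by omega), sub_self]

theorem catTz_eq_ballot (m r : ℕ) (hr : 1 ≤ r) :
    catTz (m - 1 + r) ((m : ℤ) - r) = ballot m r := by
  rcases lt_or_ge (m : ℤ) r with hlt | hle
  · rw [catTz, if_pos (by omega), ballot_of_lt hlt, Int.cast_zero]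
  have hrel := intChoose_succ_mul (2 * m - 1) (m - 1 - r)
  rw [show (m : ℤ) - 1 - r + 1 = ((m - r : ℕ) : ℤ) by omega, intChoose_natCast] at hrel
  rw [catTz, if_neg (by omega), ballot, show (m : ℤ) - r = ((m - r : ℕ) : ℤ) by omega,
    Int.toNat_natCast, show m - 1 + r + (m - r) = 2 * m - 1 by omega, intChoose_natCast]
  have hrelQ := congrArg (Int.cast : ℤ → ℚ) hrel
  push_cast [show r ≤ m by omega, show 1 ≤ 2 * m by omega, show 1 ≤ m by omega] at hrelQ ⊢
  have hmr : (m : ℚ) - 1 + r + 1 ≠ 0 := by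
    rw [show (m : ℚ) - 1 + r + 1 = ((m + r : ℕ) : ℚ) by push_cast; ring]
    positivity
  rw [div_mul_eq_mul_div, div_eq_iff hmr]
  linear_combination -hrelQ

theorem sum_Icc_ballot_mul_ballot {i j : ℕ} (hi : 1 ≤ i) (hj : 1 ≤ j) :
    ∑ r ∈ Icc (-((i + j : ℕ) : ℤ)) (i + j : ℕ), ballot i r * ballot j r
      = 2 * catalan (i + j - 1) := by
  set N := i + j - 1
  have hcorr (x y t : ℤ) (hx : x ≤ i) (hy : j - 1 ≤ y) (ht : x + (2 * j - 1 : ℕ) - y = t) :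
      ∑ r ∈ Icc (-((i + j : ℕ) : ℤ)) (i + j : ℕ),
        (intChoose (2 * i - 1) (x - r) : ℤ) * intChoose (2 * j - 1) (y - r)
        = intChoose (2 * N) t := by
    rw [← ht, show 2 * N = 2 * i - 1 + (2 * j - 1) by omega]
    exact_mod_cast sum_intChoose_sub_mul_intChoose_sub _ _ x y (by omega) (by omega)
  simp only [ballot, mul_sub, sub_mul, sum_sub_distrib]
  rw [hcorr i j N (by omega) (by omega) (by omega),
    hcorr i (j - 1) (N + 1 : ℕ) (by omega) (by omega) (by omega),
    hcorr (i - 1) j ((2 * N : ℕ) - (N + 1 : ℕ)) (by omega) (by omega) (by omega),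
    hcorr (i - 1) (j - 1) N (by omega) (by omega) (by omega), intChoose_symm,
    intChoose_natCast, intChoose_natCast, ← catalan_add_choose_succ N]
  push_cast
  ring

theorem sum_ballot_mul_ballot {i j : ℕ} (hi : 1 ≤ i) (hj : 1 ≤ j) :
    ∑ r ∈ Icc 1 i, ballot i r * ballot j r = catalan (i + j - 1) := by
  have h := sum_Icc_ballot_mul_ballot hi hj
  rw [sum_Icc_neg_eq_two_nsmul (fun r ↦ ballot i r * ballot j r)
    (fun r ↦ by simp only [ballot_neg hi, ballot_neg hj, neg_mul_neg])
    (by rw [ballot_zero hi, zero_mul]),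
    ← sum_subset (Icc_subset_Icc_right (by omega : i ≤ i + j))] at h
  · rw [nsmul_eq_mul] at h
    push_cast at h
    linarith
  · intro r hr hri
    simp only [mem_Icc] at hr hri
    rw [ballot_of_lt (by omega), zero_mul]

/-- `∑_{i=1}^{n-1} ∑_{r=1}^{i} C^{i-1+r}_{i-r} C^{n-i+r-1}_{n-i-r} = (n-1) C_{n-1}`. -/
theorem catalan_triangle_diag_sum (n : ℕ) (hn : 1 ≤ n) :
    ∑ i ∈ Finset.Icc 1 (n - 1), ∑ r ∈ Finset.Icc 1 i,
        catTz (i - 1 + r) ((i : ℤ) - r) * catTz (n - i + r - 1) ((n : ℤ) - i - r)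
      = ((n : ℚ) - 1) * catalan (n - 1) := by
  have hrow : ∀ i ∈ Icc 1 (n - 1), ∑ r ∈ Icc 1 i,
      catTz (i - 1 + r) ((i : ℤ) - r) * catTz (n - i + r - 1) ((n : ℤ) - i - r)
        = (catalan (n - 1) : ℚ) := by
    intro i hi
    rw [mem_Icc] at hi
    calc _ = ((∑ r ∈ Icc 1 i, ballot i r * ballot (n - i) r : ℤ) : ℚ) := by
          push_cast
          refine sum_congr rfl fun r hr ↦ ?_
          rw [mem_Icc] at hr
          rw [catTz_eq_ballot i r hr.1, show n - i + r - 1 = n - i - 1 + r by omega,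
            show (n : ℤ) - i - r = ((n - i : ℕ) : ℤ) - r by omega, catTz_eq_ballot (n - i) r hr.1]
      _ = catalan (n - 1) := by
          rw [sum_ballot_mul_ballot hi.1 (by omega), show i + (n - i) - 1 = n - 1 by omega,
            Int.cast_natCast]
  rw [sum_congr rfl hrow, sum_const, Nat.card_Icc, nsmul_eq_mul]
  push_cast [hn]
  ring
end
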